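/- arXiv:1904.11870 — 2 statements merged into one kernel-verified Lean document; each statement's English description precedes it below -/
import Mathlib

section
/- For every n ∈ ℕ and every σ > 0 there exists γ = γ(σ, n) with 0 < γ ≤ σ such that the following holds: if L : 𝔹_{1/γ}(0) → ℝⁿ is a γ almost isometry with L(0) = 0, then there exists a linear isometry S ∈ O(n) of ℝⁿ such that sup_{x ∈ 𝔹_{1/σ}(0)} |L(x) − S(x)| ≤ σ. -/
open Metric
open scoped RealInnerProductSpace

noncomputable section
set_option maxHeartbeats 1000000


private lemma sq_est {a d D γ : ℝ} (ha : 0 ≤ a) (hd : 0 ≤ d) (hdD : d ≤ D) (hγ0 : 0 ≤ γ)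
    (hγ1 : γ ≤ 1) (h1 : (1 - γ) * d - γ ≤ a) (h2 : a ≤ (1 + γ) * d + γ) :
    |a^2 - d^2| ≤ γ * ((D+1)*(3*D+1)) := by
  have hD0 : 0 ≤ D := le_trans hd hdD
  have e1 : a - d ≤ γ * (d+1) := by nlinarith
  have e2 : d - a ≤ γ * (d+1) := by nlinarith
  have e3 : a + d ≤ 3*D + 1 := by nlinarith
  have e4 : 0 ≤ a + d := by linarith
  have e5 : 0 ≤ γ * (d+1) := mul_nonneg hγ0 (by linarith)
  rw [abs_le]
  constructor <;>
    nlinarith [mul_le_mul e1 e3 e4 e5, mul_le_mul e2 e3 e4 e5,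
      mul_le_mul_of_nonneg_right (mul_le_mul_of_nonneg_left hdD hγ0) (by linarith : (0:ℝ) ≤ 3*D+1)]

private lemma inner_est {n : ℕ} {γ D : ℝ} (hγ0 : 0 < γ) (hγ1 : γ ≤ 1)
    {L : EuclideanSpace ℝ (Fin n) → EuclideanSpace ℝ (Fin n)} (hL0 : L 0 = 0)
    (hL : ∀ x ∈ ball (0 : EuclideanSpace ℝ (Fin n)) γ⁻¹,
      ∀ y ∈ ball (0 : EuclideanSpace ℝ (Fin n)) γ⁻¹,
        (1 - γ) * dist x y - γ ≤ ‖L x - L y‖ ∧ ‖L x - L y‖ ≤ (1 + γ) * dist x y + γ)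
    {x y : EuclideanSpace ℝ (Fin n)} (hx : x ∈ ball 0 γ⁻¹) (hy : y ∈ ball 0 γ⁻¹)
    (hxD : ‖x‖ ≤ D) (hyD : ‖y‖ ≤ D) :
    |⟪L x, L y⟫ - ⟪x, y⟫| ≤ γ * (3/2*((2*D+1)*(6*D+1))) := by
  have hD0 : 0 ≤ D := le_trans (norm_nonneg x) hxD
  have h0 : (0 : EuclideanSpace ℝ (Fin n)) ∈ ball (0 : EuclideanSpace ℝ (Fin n)) γ⁻¹ :=
    mem_ball_self (by positivity)
  obtain ⟨l1, u1⟩ := hL x hx 0 h0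
  obtain ⟨l2, u2⟩ := hL y hy 0 h0
  obtain ⟨l3, u3⟩ := hL x hx y hy
  rw [hL0, sub_zero, dist_zero_right] at l1 u1
  rw [hL0, sub_zero, dist_zero_right] at l2 u2
  rw [dist_eq_norm] at l3 u3
  have hxy2D : ‖x - y‖ ≤ 2*D := le_trans (norm_sub_le x y) (by linarith)
  have q1 := sq_est (norm_nonneg (L x)) (norm_nonneg x) (le_trans hxD (by linarith) : ‖x‖ ≤ 2*D)
    hγ0.le hγ1 l1 u1
  have q2 := sq_est (norm_nonneg (L y)) (norm_nonneg y) (le_trans hyD (by linarith) : ‖y‖ ≤ 2*D)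
    hγ0.le hγ1 l2 u2
  have q3 := sq_est (norm_nonneg (L x - L y)) (norm_nonneg (x - y)) hxy2D hγ0.le hγ1 l3 u3
  have e1 := norm_sub_sq_real (L x) (L y)
  have e2 := norm_sub_sq_real x y
  rw [abs_le] at q1 q2 q3 ⊢
  constructor <;> nlinarith [q1.1, q1.2, q2.1, q2.2, q3.1, q3.2]

private lemma nearOrthonormal (n : ℕ) (δ : ℝ) (hδ : 0 < δ) :
    ∃ ε : ℝ, 0 < ε ∧ ∀ v : Fin n → EuclideanSpace ℝ (Fin n),
      (∀ i j, |⟪v i, v j⟫ - (if i = j then 1 else 0)| ≤ ε) →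
      ∃ b : OrthonormalBasis (Fin n) ℝ (EuclideanSpace ℝ (Fin n)),
        ∀ i, ‖v i - b i‖ ≤ δ := by
  rcases Nat.eq_zero_or_pos n with rfl | hn
  · exact ⟨1, one_pos, fun v _ => ⟨EuclideanSpace.basisFun (Fin 0) ℝ, fun i => i.elim0⟩⟩
  haveI : Nonempty (Fin n) := Fin.pos_iff_nonempty.1 hn
  by_contra h
  push_neg at h
  choose v hv1 hv2 using fun k : ℕ => h (1/(k+1)) (by positivity)
  -- each v k lies in the closed ball of radius 2
  have hmem : ∀ k, v k ∈ closedBall (0 : Fin n → EuclideanSpace ℝ (Fin n)) 2 := by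
    intro k
    rw [mem_closedBall_zero_iff]
    rw [pi_norm_le_iff_of_nonneg (by norm_num)]
    intro i
    have h1 : |⟪v k i, v k i⟫ - 1| ≤ 1/(k+1) := by simpa using hv1 k i i
    have h2 : (1 : ℝ)/(k+1) ≤ 1 := by
      rw [div_le_one (by positivity)]; linarith [Nat.cast_nonneg (α := ℝ) k]
    have h3 : ⟪v k i, v k i⟫ ≤ 2 := by
      rw [abs_le] at h1; linarith
    rw [real_inner_self_eq_norm_sq] at h3
    nlinarith [norm_nonneg (v k i)]
  have hK : IsCompact (closedBall (0 : Fin n → EuclideanSpace ℝ (Fin n)) 2) :=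
    isCompact_closedBall _ _
  obtain ⟨w, -, φ, hφ, hconv⟩ := hK.tendsto_subseq hmem
  have hcomp : ∀ i, Filter.Tendsto (fun k => v (φ k) i) Filter.atTop (nhds (w i)) :=
    fun i => ((continuous_apply i).tendsto w).comp hconv
  -- the limit is orthonormal
  have hw : Orthonormal ℝ w := by
    rw [orthonormal_iff_ite]
    intro i j
    have t1 : Filter.Tendsto (fun k => ⟪v (φ k) i, v (φ k) j⟫) Filter.atTop
        (nhds ⟪w i, w j⟫) := (hcomp i).inner (hcomp j)
    have t0 : Filter.Tendsto (fun k => ⟪v (φ k) i, v (φ k) j⟫ - (if i = j then 1 else 0))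
        Filter.atTop (nhds 0) := by
      apply squeeze_zero_norm (a := fun k : ℕ => 1/((k:ℝ)+1))
      · intro k
        rw [Real.norm_eq_abs]
        refine le_trans (hv1 (φ k) i j) ?_
        have hφk : (k:ℝ) ≤ (φ k : ℝ) := by exact_mod_cast hφ.le_apply
        exact one_div_le_one_div_of_le (by positivity) (by linarith)
      · exact tendsto_one_div_add_atTop_nhds_zero_nat
    have t2 : Filter.Tendsto (fun k => ⟪v (φ k) i, v (φ k) j⟫) Filter.atTop
        (nhds (if i = j then 1 else 0)) := by
      have := t0.add_const (if i = j then (1:ℝ) else 0)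
      simpa using this
    exact tendsto_nhds_unique t1 t2
  -- build an orthonormal basis out of w
  have hcard : Fintype.card (Fin n) =
      Module.finrank ℝ (EuclideanSpace ℝ (Fin n)) := by
    simp [finrank_euclideanSpace_fin]
  let B := basisOfLinearIndependentOfCardEqFinrank hw.linearIndependent hcard
  have hB : ⇑B = w := coe_basisOfLinearIndependentOfCardEqFinrank _ _
  have hBon : Orthonormal ℝ B := by rw [hB]; exact hw
  let b := B.toOrthonormalBasis hBon
  have hb : ⇑b = w := by
    rw [show ⇑b = ⇑B from Module.Basis.coe_toOrthonormalBasis B hBon, hB]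
  -- contradiction with uniform closeness
  obtain ⟨K, hKc⟩ := (Metric.tendsto_atTop.1 hconv) δ hδ
  obtain ⟨i, hi⟩ := hv2 (φ K) b
  have : ‖v (φ K) i - b i‖ ≤ dist (v (φ K)) w := by
    rw [hb]
    have := dist_le_pi_dist (v (φ K)) w i
    rwa [dist_eq_norm] at this
  have := hKc K le_rfl
  simp only [Function.comp] at this
  linarith [lt_of_lt_of_le hi ‹‖v (φ K) i - b i‖ ≤ dist (v (φ K)) w›]

/-- For every `n` and every `σ > 0` there exists `0 < γ ≤ σ` such that any
`γ` almost isometry `L : 𝔹_{1/γ}(0) → ℝⁿ` fixing the origin is `σ`-close in the sup norm on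
`𝔹_{1/σ}(0)` to a linear isometry `S ∈ O(n)`. -/
theorem almost_isometry_close_to_orthogonal (n : ℕ) (σ : ℝ) (hσ : 0 < σ) :
    ∃ γ : ℝ, 0 < γ ∧ γ ≤ σ ∧
      ∀ L : EuclideanSpace ℝ (Fin n) → EuclideanSpace ℝ (Fin n),
        L 0 = 0 →
        (∀ x ∈ ball (0 : EuclideanSpace ℝ (Fin n)) γ⁻¹,
          ∀ y ∈ ball (0 : EuclideanSpace ℝ (Fin n)) γ⁻¹,
            (1 - γ) * dist x y - γ ≤ ‖L x - L y‖ ∧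
              ‖L x - L y‖ ≤ (1 + γ) * dist x y + γ) →
        ∃ S : EuclideanSpace ℝ (Fin n) ≃ₗᵢ[ℝ] EuclideanSpace ℝ (Fin n),
          ∀ x ∈ ball (0 : EuclideanSpace ℝ (Fin n)) σ⁻¹, ‖L x - S x‖ ≤ σ := by
  have hσi : 0 < σ⁻¹ := inv_pos.2 hσ
  obtain ⟨D, hD1, hDσ⟩ : ∃ D : ℝ, 1 ≤ D ∧ σ⁻¹ ≤ D :=
    ⟨max 1 σ⁻¹, le_max_left _ _, le_max_right _ _⟩
  have hD0 : (0:ℝ) < D := lt_of_lt_of_le one_pos hD1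
  have hn0 : (0:ℝ) ≤ (n:ℝ) := Nat.cast_nonneg n
  -- constants
  have hC0 : (0:ℝ) < 3/2*((2*D+1)*(6*D+1)) := by nlinarith
  have hprod : (0:ℝ) ≤ 2*(n:ℝ)*D*(2*D+1) :=
    mul_nonneg (mul_nonneg (mul_nonneg (by norm_num) hn0) hD0.le) (by linarith)
  have hc0 : (0:ℝ) < 2*(n:ℝ)*D*(2*D+1)+1 := by linarith
  have hδ₀ : (0:ℝ) < σ^2/(2*(2*(n:ℝ)*D*(2*D+1)+1)) := by
    apply div_pos (by nlinarith) (by nlinarith)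
  obtain ⟨ε, hε, hNO⟩ := nearOrthonormal n (σ^2/(2*(2*(n:ℝ)*D*(2*D+1)+1))) hδ₀
  have hA0 : (0:ℝ) < 3/2*((2*D+1)*(6*D+1))*(1+2*(n:ℝ)*D) := by nlinarith
  set γ : ℝ := min σ (min (1/2) (min (ε/(2*(3/2*((2*D+1)*(6*D+1)))))
    (σ^2/(2*(3/2*((2*D+1)*(6*D+1))*(1+2*(n:ℝ)*D)))))) with hγdef
  have hγ0 : 0 < γ := by
    refine lt_min hσ (lt_min one_half_pos (lt_min ?_ ?_))
    · exact div_pos hε (by nlinarith)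
    · exact div_pos (by nlinarith) (by nlinarith)
  have hγσ : γ ≤ σ := min_le_left _ _
  have hγhalf : γ ≤ 1/2 := le_trans (min_le_right _ _) (min_le_left _ _)
  have hγ1 : γ ≤ 1 := by linarith
  have hγε : γ * (3/2*((2*D+1)*(6*D+1))) ≤ ε := by
    have h2 : γ ≤ ε/(2*(3/2*((2*D+1)*(6*D+1)))) :=
      le_trans (le_trans (min_le_right _ _) (min_le_right _ _)) (min_le_left _ _)
    rw [le_div_iff₀ (by nlinarith)] at h2
    nlinarith
  have hγA : γ * (3/2*((2*D+1)*(6*D+1))*(1+2*(n:ℝ)*D)) ≤ σ^2/2 := by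
    have h2 : γ ≤ σ^2/(2*(3/2*((2*D+1)*(6*D+1))*(1+2*(n:ℝ)*D))) :=
      le_trans (min_le_right _ _) (le_trans (min_le_right _ _) (min_le_right _ _))
    rw [le_div_iff₀ (by nlinarith)] at h2
    linarith
  refine ⟨γ, hγ0, hγσ, ?_⟩
  intro L hL0 hL
  have hinv : σ⁻¹ ≤ γ⁻¹ := inv_anti₀ hγ0 hγσ
  have hball : ball (0 : EuclideanSpace ℝ (Fin n)) σ⁻¹ ⊆ ball 0 γ⁻¹ := ball_subset_ball hinv
  have h2γ : (2:ℝ) ≤ γ⁻¹ := by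
    rw [show γ⁻¹ = 1/γ from (one_div γ).symm, le_div_iff₀ hγ0]
    linarith
  have h0mem : (0 : EuclideanSpace ℝ (Fin n)) ∈ ball (0 : EuclideanSpace ℝ (Fin n)) γ⁻¹ :=
    mem_ball_self (by positivity)
  -- the images of the standard basis vectors
  set e : Fin n → EuclideanSpace ℝ (Fin n) := fun i => EuclideanSpace.single i (1:ℝ) with hedef
  have he_norm : ∀ i, ‖e i‖ = 1 := fun i => by
    simp [hedef, EuclideanSpace.norm_single]
  have he_mem : ∀ i, e i ∈ ball (0 : EuclideanSpace ℝ (Fin n)) γ⁻¹ := fun i => by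
    rw [mem_ball_zero_iff, he_norm]; linarith
  have he_inner : ∀ i j, ⟪e i, e j⟫ = if i = j then (1:ℝ) else 0 := by
    have hON := (EuclideanSpace.basisFun (Fin n) ℝ).orthonormal
    rw [orthonormal_iff_ite] at hON
    intro i j
    have := hON i j
    rwa [EuclideanSpace.basisFun_apply, EuclideanSpace.basisFun_apply] at this
  -- the almost-orthonormal family
  have gram : ∀ i j, |⟪L (e i), L (e j)⟫ - (if i = j then (1:ℝ) else 0)| ≤ ε := by
    intro i j
    have := inner_est hγ0 hγ1 hL0 hL (he_mem i) (he_mem j)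
      ((he_norm i).le.trans hD1) ((he_norm j).le.trans hD1)
    rw [he_inner] at this
    linarith
  obtain ⟨b, hb⟩ := hNO (fun i => L (e i)) gram
  refine ⟨b.repr.symm, ?_⟩
  intro x hx
  have hxγ : x ∈ ball (0 : EuclideanSpace ℝ (Fin n)) γ⁻¹ := hball hx
  have hxD : ‖x‖ ≤ D := le_trans (mem_ball_zero_iff.1 hx).le hDσ
  -- bound on ‖L x‖
  have hLxM : ‖L x‖ ≤ 2*D+1 := by
    obtain ⟨-, u1⟩ := hL x hxγ 0 h0mem
    rw [hL0, sub_zero, dist_zero_right] at u1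
    nlinarith [norm_nonneg x]
  -- coordinatewise estimates
  have hxi : ∀ i, ⟪x, e i⟫ = x i := by
    intro i
    rw [hedef]
    simp [EuclideanSpace.inner_single_right]
  have hxiD : ∀ i, |x i| ≤ D := by
    intro i
    rw [← hxi]
    calc |⟪x, e i⟫| ≤ ‖x‖ * ‖e i‖ := abs_real_inner_le_norm x (e i)
    _ ≤ D := by rw [he_norm]; linarith
  have hterm : ∀ i, |⟪L x, b i⟫ - x i| ≤
      γ * (3/2*((2*D+1)*(6*D+1))) + (2*D+1) * (σ^2/(2*(2*(n:ℝ)*D*(2*D+1)+1))) := by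
    intro i
    have h1 : |⟪L x, L (e i)⟫ - x i| ≤ γ * (3/2*((2*D+1)*(6*D+1))) := by
      have := inner_est hγ0 hγ1 hL0 hL hxγ (he_mem i) hxD ((he_norm i).le.trans hD1)
      rwa [hxi] at this
    have h3 : |⟪L x, b i - L (e i)⟫| ≤
        (2*D+1) * (σ^2/(2*(2*(n:ℝ)*D*(2*D+1)+1))) := by
      calc |⟪L x, b i - L (e i)⟫| ≤ ‖L x‖ * ‖b i - L (e i)‖ :=
            abs_real_inner_le_norm _ _
      _ ≤ (2*D+1) * (σ^2/(2*(2*(n:ℝ)*D*(2*D+1)+1))) := by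
          apply mul_le_mul hLxM _ (norm_nonneg _) (by nlinarith)
          rw [norm_sub_rev]
          exact hb i
    have h4 : ⟪L x, b i⟫ = ⟪L x, L (e i)⟫ + ⟪L x, b i - L (e i)⟫ := by
      rw [inner_sub_right]; ring
    rw [abs_le] at h1 h3 ⊢
    constructor <;> [linarith [h1.1, h3.1]; linarith [h1.2, h3.2]]
  -- inner product with S x
  have ip : ⟪L x, (b.repr.symm x : EuclideanSpace ℝ (Fin n))⟫ = ∑ i, x i * ⟪L x, b i⟫ := by
    rw [← b.sum_repr_symm, inner_sum]
    congr 1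
    ext i
    rw [real_inner_smul_right]
  have hxx : ⟪x, x⟫ = ∑ i, x i * x i := by
    rw [PiLp.inner_apply]
    simp
    exact Finset.sum_congr rfl (fun i _ => sq (x i))
  have hsum : |⟪L x, (b.repr.symm x : EuclideanSpace ℝ (Fin n))⟫ - ⟪x, x⟫| ≤
      (n:ℝ) * (D * (γ * (3/2*((2*D+1)*(6*D+1))) +
        (2*D+1) * (σ^2/(2*(2*(n:ℝ)*D*(2*D+1)+1))))) := by
    rw [ip, hxx, ← Finset.sum_sub_distrib]
    calc |∑ i, (x i * ⟪L x, b i⟫ - x i * x i)| ≤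
        ∑ i, |x i * ⟪L x, b i⟫ - x i * x i| := Finset.abs_sum_le_sum_abs _ _
    _ ≤ ∑ _i : Fin n, D * (γ * (3/2*((2*D+1)*(6*D+1))) +
        (2*D+1) * (σ^2/(2*(2*(n:ℝ)*D*(2*D+1)+1)))) := by
        apply Finset.sum_le_sum
        intro i _
        have : x i * ⟪L x, b i⟫ - x i * x i = x i * (⟪L x, b i⟫ - x i) := by ring
        rw [this, abs_mul]
        exact mul_le_mul (hxiD i) (hterm i) (abs_nonneg _) hD0.le
    _ = (n:ℝ) * (D * (γ * (3/2*((2*D+1)*(6*D+1))) +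
        (2*D+1) * (σ^2/(2*(2*(n:ℝ)*D*(2*D+1)+1))))) := by
        rw [Finset.sum_const, Finset.card_univ, Fintype.card_fin, nsmul_eq_mul]
  have hn2 : |⟪L x, L x⟫ - ⟪x, x⟫| ≤ γ * (3/2*((2*D+1)*(6*D+1))) :=
    inner_est hγ0 hγ1 hL0 hL hxγ hxγ hxD hxD
  -- final computation
  have expand := norm_sub_sq_real (L x) (b.repr.symm x : EuclideanSpace ℝ (Fin n))
  have hS : ‖(b.repr.symm x : EuclideanSpace ℝ (Fin n))‖ = ‖x‖ :=
    LinearIsometryEquiv.norm_map _ x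
  have hLsq : ‖L x‖^2 = ⟪L x, L x⟫ := (real_inner_self_eq_norm_sq (L x)).symm
  have hxsq : ‖x‖^2 = ⟪x, x⟫ := (real_inner_self_eq_norm_sq x).symm
  -- key quadratic bound
  have hq3 : 2*((n:ℝ)*(D*((2*D+1)*(σ^2/(2*(2*(n:ℝ)*D*(2*D+1)+1)))))) ≤ σ^2/2 := by
    have ht0 : (0:ℝ) ≤ 2*(n:ℝ)*D*(2*D+1) := hprod
    have heq : 2*((n:ℝ)*(D*((2*D+1)*(σ^2/(2*(2*(n:ℝ)*D*(2*D+1)+1)))))) =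
        (2*(n:ℝ)*D*(2*D+1)*σ^2)/(2*(2*(n:ℝ)*D*(2*D+1)+1)) := by ring
    rw [heq, div_le_div_iff₀ (by linarith) (by norm_num)]
    have := sq_nonneg σ
    nlinarith [mul_nonneg hprod (sq_nonneg σ)]
  have hfin : ‖L x - (b.repr.symm x : EuclideanSpace ℝ (Fin n))‖^2 ≤ σ^2 := by
    rw [abs_le] at hsum hn2
    rw [expand, hS, hLsq, hxsq]
    linarith [hsum.1, hsum.2, hn2.1, hn2.2, hγA, hγε, hq3]
  nlinarith [norm_nonneg (L x - (b.repr.symm x : EuclideanSpace ℝ (Fin n))), hfin, hσ]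
end
end

section
/- Let n ∈ ℕ, 0 < ε₀ < 1/2, let (X,d₀) be a metric space, let B ⊆ X be a separable subset of finite diameter, and x₀ ∈ B. Let (tᵢ) be a sequence of positive reals with tᵢ → 0, let (dᵢ) be metrics on B converging uniformly on B × B to d₀, and let Fᵢ : B → ℝⁿ be maps satisfying (1−ε₀)dᵢ(x,y) − ε₀√tᵢ ≤ |Fᵢ(x) − Fᵢ(y)| ≤ (1+ε₀)dᵢ(x,y) + ε₀√tᵢ for all x,y ∈ B, and sup_i |Fᵢ(x₀)| < ∞. Then there is a subsequence of (Fᵢ) converging uniformly on B to a map F₀ : B → ℝⁿ which is (1+ε₀) bi-Lipschitz, i.e. (1−ε₀)d₀(x,y) ≤ |F₀(x) − F₀(y)| ≤ (1+ε₀)d₀(x,y) for all x,y ∈ B. -/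
open Set Metric Filter Topology

noncomputable section

/-- compactness of approximate distance coordinates, Section 4 of the
paper. If `dᵢ` are metrics on a separable bounded subset `B` converging uniformly to the
ambient metric `d₀`, `tᵢ → 0`, and `Fᵢ : B → ℝⁿ` are `ε₀` almost isometries with error
`ε₀√tᵢ` with respect to `dᵢ` which are bounded at one point, then a subsequence of the
`Fᵢ` converges uniformly on `B` to a `(1+ε₀)` bi-Lipschitz map `F₀`. -/
theorem almost_isometries_limit_biLipschitz (n : ℕ) (ε₀ : ℝ)
    (hε₀ : 0 < ε₀) (hε₀' : ε₀ < 1 / 2)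
    (X : Type*) [MetricSpace X] (B : Set X)
    (hsep : TopologicalSpace.IsSeparable B)
    (hbdd : Bornology.IsBounded B)
    (x₀ : X) (hx₀ : x₀ ∈ B)
    (t : ℕ → ℝ) (ht : ∀ i, 0 < t i) (htlim : Tendsto t atTop (nhds 0))
    -- dᵢ are metrics on B ...
    (d : ℕ → X → X → ℝ)
    (hd_self : ∀ i, ∀ x ∈ B, d i x x = 0)
    (hd_eq : ∀ i, ∀ x ∈ B, ∀ y ∈ B, d i x y = 0 → x = y)
    (hd_symm : ∀ i, ∀ x ∈ B, ∀ y ∈ B, d i x y = d i y x)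
    (hd_tri : ∀ i, ∀ x ∈ B, ∀ y ∈ B, ∀ z ∈ B, d i x z ≤ d i x y + d i y z)
    -- ... converging uniformly on B × B to d₀
    (hdconv : TendstoUniformlyOn (fun i p => d i p.1 p.2) (fun p : X × X => dist p.1 p.2)
      atTop (B ×ˢ B))
    (F : ℕ → X → EuclideanSpace ℝ (Fin n))
    -- the sandwich estimate for Fᵢ
    (hF : ∀ i, ∀ x ∈ B, ∀ y ∈ B,
      (1 - ε₀) * d i x y - ε₀ * Real.sqrt (t i) ≤ ‖F i x - F i y‖ ∧
        ‖F i x - F i y‖ ≤ (1 + ε₀) * d i x y + ε₀ * Real.sqrt (t i))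
    -- sup_i |Fᵢ(x₀)| < ∞
    (hFbdd : ∃ c : ℝ, ∀ i, ‖F i x₀‖ ≤ c) :
    ∃ φ : ℕ → ℕ, StrictMono φ ∧
      ∃ F₀ : X → EuclideanSpace ℝ (Fin n),
        TendstoUniformlyOn (fun k x => F (φ k) x) F₀ atTop B ∧
        ∀ x ∈ B, ∀ y ∈ B,
          (1 - ε₀) * dist x y ≤ ‖F₀ x - F₀ y‖ ∧ ‖F₀ x - F₀ y‖ ≤ (1 + ε₀) * dist x y := by
  classical
  obtain ⟨c, hc⟩ := hFbdd
  obtain ⟨R, hR⟩ := Metric.isBounded_iff.mp hbdd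
  -- nonnegativity of the metrics dᵢ
  have hd_nonneg : ∀ i, ∀ x ∈ B, ∀ y ∈ B, 0 ≤ d i x y := by
    intro i x hx y hy
    have h1 := hd_tri i x hx y hy x hx
    rw [hd_self i x hx, hd_symm i y hy x hx] at h1
    linarith
  -- uniform closeness of dᵢ to dist
  have hd_close : ∀ ε > (0 : ℝ), ∀ᶠ i in atTop, ∀ x ∈ B, ∀ y ∈ B,
      |d i x y - dist x y| < ε := by
    intro ε hε
    have h := (Metric.tendstoUniformlyOn_iff.mp hdconv) ε hε
    filter_upwards [h] with i hi x hx y hy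
    have := hi (x, y) ⟨hx, hy⟩
    rw [Real.dist_eq, abs_sub_comm] at this
    exact this
  have hsqrt : Tendsto (fun i => Real.sqrt (t i)) atTop (𝓝 0) := by
    have h := (Real.continuous_sqrt.tendsto 0).comp htlim
    rwa [Real.sqrt_zero] at h
  have hsqrt_small : ∀ ε > (0 : ℝ), ∀ᶠ i in atTop, Real.sqrt (t i) < ε := by
    intro ε hε
    have := hsqrt.eventually (eventually_lt_nhds hε)
    simpa using this
  -- initial index past which everything is tame
  obtain ⟨i0, hi0⟩ : ∃ i0, ∀ i ≥ i0,
      (∀ x ∈ B, ∀ y ∈ B, |d i x y - dist x y| < 1) ∧ Real.sqrt (t i) ≤ 1 := by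
    have h := (hd_close 1 one_pos).and ((hsqrt_small 1 one_pos).mono (fun i h => h.le))
    exact eventually_atTop.mp h
  -- uniform bound on ‖F i x‖ for i ≥ i0, x ∈ B
  set M : ℝ := c + ((1 + ε₀) * (dist x₀ x₀ + R + 1) + ε₀) with hM_def
  have hM : ∀ i ≥ i0, ∀ x ∈ B, ‖F i x‖ ≤ M := by
    intro i hi x hx
    have h1 : ‖F i x - F i x₀‖ ≤ (1 + ε₀) * d i x x₀ + ε₀ * Real.sqrt (t i) :=
      (hF i x hx x₀ hx₀).2
    have h2 : d i x x₀ < dist x x₀ + 1 := by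
      have := (hi0 i hi).1 x hx x₀ hx₀
      have := abs_lt.mp this
      linarith [this.1, this.2]
    have h3 : Real.sqrt (t i) ≤ 1 := (hi0 i hi).2
    have h4 : dist x x₀ ≤ R := hR hx hx₀
    have h5 : ‖F i x‖ ≤ ‖F i x - F i x₀‖ + ‖F i x₀‖ := by
      calc ‖F i x‖ = ‖(F i x - F i x₀) + F i x₀‖ := by rw [sub_add_cancel]
        _ ≤ ‖F i x - F i x₀‖ + ‖F i x₀‖ := norm_add_le _ _
    have h6 : ‖F i x₀‖ ≤ c := hc i
    have h7 : ε₀ * Real.sqrt (t i) ≤ ε₀ := by nlinarith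
    have hd0 : (0 : ℝ) ≤ dist x x₀ := dist_nonneg
    have h8 : (1 + ε₀) * d i x x₀ ≤ (1 + ε₀) * (dist x x₀ + 1) := by nlinarith
    have : ‖F i x‖ ≤ c + ((1 + ε₀) * (dist x x₀ + 1) + ε₀) := by linarith
    have h9 : (1 + ε₀) * (dist x x₀ + 1) ≤ (1 + ε₀) * (dist x₀ x₀ + R + 1) := by
      have : dist x₀ x₀ = 0 := dist_self _
      nlinarith
    rw [hM_def]; linarith
  -- finite δ-nets of B with centers in B
  have hnet : ∀ δ > (0 : ℝ), ∃ T : Set X, T.Finite ∧ T ⊆ B ∧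
      ∀ x ∈ B, ∃ y ∈ T, dist x y < δ := by
    intro δ hδ
    obtain ⟨i, hi_ge, hi_close, hi_sqrt⟩ : ∃ i, i ≥ i0 ∧
        (∀ x ∈ B, ∀ y ∈ B, |d i x y - dist x y| < δ / 6) ∧
        Real.sqrt (t i) < δ / 6 := by
      have h := ((hd_close (δ / 6) (by linarith)).and
        (hsqrt_small (δ / 6) (by linarith))).and (eventually_ge_atTop i0)
      obtain ⟨i, hi⟩ := h.exists
      exact ⟨i, hi.2, hi.1.1, hi.1.2⟩
    -- the image F i '' B is totally bounded in ℝⁿ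
    have himg : TotallyBounded (F i '' B) := by
      apply (isCompact_closedBall (0 : EuclideanSpace ℝ (Fin n)) M).totallyBounded.subset
      rintro _ ⟨x, hx, rfl⟩
      simpa [mem_closedBall_zero_iff] using hM i hi_ge x hx
    obtain ⟨T', hT'sub, hT'fin, hT'cov⟩ :=
      totallyBounded_iff_subset.mp himg _ (dist_mem_uniformity (show (0:ℝ) < δ/6 by linarith))
    -- choose preimages
    have hpre : ∀ z : EuclideanSpace ℝ (Fin n), ∃ wz : X,
        z ∈ T' → wz ∈ B ∧ F i wz = z := by
      intro z
      by_cases hz : z ∈ T'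
      · obtain ⟨u, hu, huz⟩ := hT'sub hz
        exact ⟨u, fun _ => ⟨hu, huz⟩⟩
      · exact ⟨x₀, fun h => absurd h hz⟩
    choose w hw using hpre
    have hwB : ∀ z ∈ T', w z ∈ B := fun z hz => (hw z hz).1
    have hwF : ∀ z ∈ T', F i (w z) = z := fun z hz => (hw z hz).2
    refine ⟨w '' T', ?_, ?_, ?_⟩
    · exact hT'fin.image w
    · rintro _ ⟨z, hz, rfl⟩; exact hwB z hz
    · intro x hx
      have : F i x ∈ ⋃ y ∈ T', {u | (u, y) ∈ {p : _ × _ | dist p.1 p.2 < δ/6}} :=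
        hT'cov ⟨x, hx, rfl⟩
      obtain ⟨z, hz, hxz⟩ := mem_iUnion₂.mp this
      have hxz : dist (F i x) z < δ / 6 := hxz
      refine ⟨w z, mem_image_of_mem _ hz, ?_⟩
      have hFxz : ‖F i x - F i (w z)‖ < δ / 6 := by
        rw [← dist_eq_norm, hwF z hz]; exact hxz
      have hlow := (hF i x hx (w z) (hwB z hz)).1
      have hdd : d i x (w z) ≤ 2 * (δ / 6 + δ / 6) := by
        have hnn := hd_nonneg i x hx (w z) (hwB z hz)
        nlinarith [hε₀', hε₀, Real.sqrt_nonneg (t i), hi_sqrt.le]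
      have hcl := abs_lt.mp (hi_close x hx (w z) (hwB z hz))
      linarith [hcl.1, hcl.2]
  -- a sequence of finer and finer nets, and a countable dense-ish sequence
  have hnetk : ∀ k : ℕ, ∃ T : Set X, T.Finite ∧ T ⊆ B ∧
      ∀ x ∈ B, ∃ y ∈ T, dist x y < 1 / (k + 1) := fun k =>
    hnet (1 / (k + 1)) (by positivity)
  choose net net_fin net_sub net_cov using hnetk
  set D : Set X := ⋃ k, net k with hD_def
  have hD_count : D.Countable := countable_iUnion fun k => (net_fin k).countable
  have hD_sub : D ⊆ B := iUnion_subset fun k => net_sub k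
  have hD_ne : D.Nonempty := by
    obtain ⟨y, hy, -⟩ := net_cov 0 x₀ hx₀
    exact ⟨y, mem_iUnion.mpr ⟨0, hy⟩⟩
  obtain ⟨s, hs_range⟩ := hD_count.exists_eq_range hD_ne
  have hs_memB : ∀ m, s m ∈ B := fun m => hD_sub (hs_range ▸ mem_range_self m)
  -- compactness: extract subsequence converging at all points s m
  set K : Set (ℕ → EuclideanSpace ℝ (Fin n)) :=
    Set.univ.pi (fun _ => closedBall 0 M) with hK_def
  have hK : IsCompact K := isCompact_univ_pi fun _ => isCompact_closedBall _ _
  have hmemK : ∀ k : ℕ, (fun m => F (i0 + k) (s m)) ∈ K := by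
    intro k
    rw [hK_def, Set.mem_univ_pi]
    intro m
    simpa [mem_closedBall_zero_iff] using hM (i0 + k) (Nat.le_add_right _ _) (s m) (hs_memB m)
  obtain ⟨a, -, φ, hφ, hconv⟩ := hK.tendsto_subseq hmemK
  set ψ : ℕ → ℕ := fun k => i0 + φ k with hψ_def
  have hψ_mono : StrictMono ψ := fun p q h => by
    simp only [hψ_def]; exact Nat.add_lt_add_left (hφ h) i0
  have hψ_ge : ∀ k, k ≤ ψ k := fun k =>
    le_trans (hφ.le_apply) (Nat.le_add_left _ _)
  have hψ_ge0 : ∀ k, i0 ≤ ψ k := fun k => Nat.le_add_right _ _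
  have hpt : ∀ m, Tendsto (fun k => F (ψ k) (s m)) atTop (𝓝 (a m)) := by
    intro m
    have := tendsto_pi_nhds.mp hconv m
    exact this
  -- asymptotic Lipschitz estimate
  have hLip : ∀ ε > (0 : ℝ), ∃ N, ∀ i ≥ N, ∀ x ∈ B, ∀ y ∈ B,
      ‖F i x - F i y‖ ≤ (1 + ε₀) * dist x y + ε := by
    intro ε hε
    have h := (hd_close (ε / 4) (by linarith)).and (hsqrt_small (ε / 2) (by linarith))
    obtain ⟨N, hN⟩ := eventually_atTop.mp h
    refine ⟨N, fun i hi x hx y hy => ?_⟩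
    have h1 := (hF i x hx y hy).2
    have h2 := abs_lt.mp ((hN i hi).1 x hx y hy)
    have h3 := (hN i hi).2
    have h4 : ε₀ * Real.sqrt (t i) ≤ ε / 2 := by
      nlinarith [Real.sqrt_nonneg (t i)]
    nlinarith [dist_nonneg (x := x) (y := y)]
  -- uniform Cauchy
  have hCauchy : UniformCauchySeqOn (fun k x => F (ψ k) x) atTop B := by
    rw [Metric.uniformCauchySeqOn_iff]
    intro ε hε
    obtain ⟨N₁, hN₁⟩ := hLip (ε / 8) (by linarith)
    -- a fine net
    obtain ⟨k₀, hk₀⟩ := exists_nat_one_div_lt (show (0:ℝ) < ε / 16 by linarith)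
    -- Cauchy at net points
    have hCy : ∀ y : X, ∃ N : ℕ, y ∈ net k₀ →
        ∀ p ≥ N, ∀ q ≥ N, dist (F (ψ p) y) (F (ψ q) y) < ε / 4 := by
      intro y
      by_cases hy : y ∈ net k₀
      · have hyD : y ∈ D := mem_iUnion.mpr ⟨k₀, hy⟩
        obtain ⟨m, hm⟩ := (hs_range ▸ hyD : y ∈ range s)
        have hcs : CauchySeq (fun k => F (ψ k) y) := by
          rw [← hm]; exact (hpt m).cauchySeq
        obtain ⟨N, hN⟩ := Metric.cauchySeq_iff.mp hcs (ε / 4) (by linarith)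
        exact ⟨N, fun _ p hp q hq => hN p hp q hq⟩
      · exact ⟨0, fun hy' => absurd hy' hy⟩
    choose Nf hNf using hCy
    set N₂ : ℕ := ((net_fin k₀).toFinset).sup Nf with hN₂_def
    refine ⟨max N₁ N₂, fun p hp q hq x hx => ?_⟩
    obtain ⟨y, hy, hxy⟩ := net_cov k₀ x hx
    have hyB : y ∈ B := net_sub k₀ hy
    have hxy' : dist x y < ε / 16 := lt_trans hxy hk₀
    have hψp : N₁ ≤ ψ p := le_trans (le_trans (le_max_left _ _) hp) (hψ_ge p)
    have hψq : N₁ ≤ ψ q := le_trans (le_trans (le_max_left _ _) hq) (hψ_ge q)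
    have h1 : ‖F (ψ p) x - F (ψ p) y‖ ≤ (1 + ε₀) * dist x y + ε / 8 :=
      hN₁ (ψ p) hψp x hx y hyB
    have h2 : ‖F (ψ q) x - F (ψ q) y‖ ≤ (1 + ε₀) * dist x y + ε / 8 :=
      hN₁ (ψ q) hψq x hx y hyB
    have hNy : Nf y ≤ N₂ := by
      rw [hN₂_def]
      exact Finset.le_sup ((net_fin k₀).mem_toFinset.mpr hy)
    have h3 : dist (F (ψ p) y) (F (ψ q) y) < ε / 4 :=
      hNf y hy p (le_trans (le_trans hNy (le_max_right _ _)) hp)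
        q (le_trans (le_trans hNy (le_max_right _ _)) hq)
    have htri : ‖F (ψ p) x - F (ψ q) x‖ ≤
        ‖F (ψ p) x - F (ψ p) y‖ + ‖F (ψ p) y - F (ψ q) y‖
          + ‖F (ψ q) y - F (ψ q) x‖ := by
      simpa [dist_eq_norm] using
        dist_triangle4 (F (ψ p) x) (F (ψ p) y) (F (ψ q) y) (F (ψ q) x)
    rw [dist_eq_norm] at h3 ⊢
    have h2' : ‖F (ψ q) y - F (ψ q) x‖ ≤ (1 + ε₀) * dist x y + ε / 8 := by
      rwa [norm_sub_rev]
    have hd0 : (0 : ℝ) ≤ dist x y := dist_nonneg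
    nlinarith [hε₀, hε₀']
  -- pointwise limits and the limit map
  have hCS : ∀ x ∈ B, CauchySeq (fun k => F (ψ k) x) := by
    intro x hx
    rw [Metric.cauchySeq_iff]
    intro ε hε
    obtain ⟨N, hN⟩ := Metric.uniformCauchySeqOn_iff.mp hCauchy ε hε
    exact ⟨N, fun p hp q hq => hN p hp q hq x hx⟩
  set F₀ : X → EuclideanSpace ℝ (Fin n) :=
    fun x => limUnder atTop (fun k => F (ψ k) x) with hF₀_def
  have htend : ∀ x ∈ B, Tendsto (fun k => F (ψ k) x) atTop (𝓝 (F₀ x)) := fun x hx =>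
    (hCS x hx).tendsto_limUnder
  refine ⟨ψ, hψ_mono, F₀, hCauchy.tendstoUniformlyOn_of_tendsto htend, ?_⟩
  intro x hx y hy
  have hnorm : Tendsto (fun k => ‖F (ψ k) x - F (ψ k) y‖) atTop (𝓝 ‖F₀ x - F₀ y‖) :=
    ((htend x hx).sub (htend y hy)).norm
  have hdxy : Tendsto (fun k => d (ψ k) x y) atTop (𝓝 (dist x y)) :=
    (hdconv.tendsto_at (Set.mk_mem_prod hx hy)).comp (hψ_mono.tendsto_atTop)
  have hst : Tendsto (fun k => ε₀ * Real.sqrt (t (ψ k))) atTop (𝓝 0) := by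
    have h := (hsqrt.comp (hψ_mono.tendsto_atTop)).const_mul ε₀
    simpa using h
  constructor
  · have hlo : Tendsto (fun k => (1 - ε₀) * d (ψ k) x y - ε₀ * Real.sqrt (t (ψ k)))
        atTop (𝓝 ((1 - ε₀) * dist x y)) := by
      have h := (hdxy.const_mul (1 - ε₀)).sub hst
      simpa using h
    exact le_of_tendsto_of_tendsto' hlo hnorm fun k => (hF (ψ k) x hx y hy).1
  · have hhi : Tendsto (fun k => (1 + ε₀) * d (ψ k) x y + ε₀ * Real.sqrt (t (ψ k)))
        atTop (𝓝 ((1 + ε₀) * dist x y)) := by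
      have h := (hdxy.const_mul (1 + ε₀)).add hst
      simpa using h
    exact le_of_tendsto_of_tendsto' hnorm hhi fun k => (hF (ψ k) x hx y hy).2
end
end
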